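/- arXiv:2605.12692 — 7 statements merged into one kernel-verified Lean document; each statement's English description precedes it below -/
import Mathlib

section
/- Let Q be a quandle, V a finite-dimensional complex inner product space, and ρ : Q → GL(V) a quandle representation such that every ρ(x), x ∈ Q, is a linear isometry of V. Then ρ is completely reducible: V is the internal direct sum of a finite family of subrepresentations each of which is irreducible. -/
open Quandles

/-- `ρ` is a quandle representation: `ρ(x ◃ y) = ρ(x) ρ(y) ρ(x)⁻¹`. -/
def IsQuandleRep {Q : Type} [Quandle Q] {V : Type} [AddCommGroup V] [Module ℂ V]
    (ρ : Q → V ≃ₗ[ℂ] V) : Prop :=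
  ∀ x y : Q, ρ (x ◃ y) = ρ x * ρ y * (ρ x)⁻¹

/-- `W` is a subrepresentation: it is stable under every `ρ(x)`. -/
def IsSubrep {Q : Type} [Quandle Q] {V : Type} [AddCommGroup V] [Module ℂ V]
    (ρ : Q → V ≃ₗ[ℂ] V) (W : Submodule ℂ V) : Prop :=
  ∀ x : Q, ∀ v ∈ W, ρ x v ∈ W

/-- The subrepresentation `W` is irreducible: the only subrepresentations contained in
`W` are `0` and `W`. -/
def IsIrreducibleSubrep {Q : Type} [Quandle Q] {V : Type} [AddCommGroup V] [Module ℂ V]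
    (ρ : Q → V ≃ₗ[ℂ] V) (W : Submodule ℂ V) : Prop :=
  IsSubrep ρ W ∧ ∀ U : Submodule ℂ V, U ≤ W → IsSubrep ρ U → U = ⊥ ∨ U = W

/-!
The subrepresentations form a complete sublattice of the lattice of subspaces, which is modular
and, since `V` is finite-dimensional, well-founded and hence compactly generated. Unitarity makes
it complemented: the orthogonal complement of a subrepresentation is again one, because each
`ρ x` maps a subrepresentation onto itself and preserves orthogonality. A complemented compactly
generated modular lattice is atomistic, so `⊤` is the supremum of an independent set of atoms,
which are irreducible subrepresentations; well-foundedness makes that set finite.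
-/

section Subrep

variable {Q : Type} [Quandle Q]

section Module

variable {V : Type} [AddCommGroup V] [Module ℂ V] (ρ : Q → V ≃ₗ[ℂ] V)

def subrepLattice : CompleteSublattice (Submodule ℂ V) :=
  CompleteSublattice.mk' {W | IsSubrep ρ W}
    (fun s hs x _ hv =>
      (sSup_le fun _ hW w hw => le_sSup hW (hs hW x w hw) :
        sSup s ≤ (sSup s).comap (ρ x : V →ₗ[ℂ] V)) hv)
    (fun _ hs x _ hv => Submodule.mem_sInf.2 fun W hW => hs hW x _ (Submodule.mem_sInf.1 hv W hW))

instance : IsModularLattice (subrepLattice ρ) :=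
  ⟨fun {_} y {_} h => IsModularLattice.sup_inf_le_assoc_of_le (y : Submodule ℂ V) h⟩

lemma isIrreducibleSubrep_of_isAtom {W : subrepLattice ρ} (hW : IsAtom W) :
    IsIrreducibleSubrep ρ W := by
  refine ⟨W.2, fun U hUW hU => ?_⟩
  rcases hW.le_iff.1 (show (⟨U, hU⟩ : subrepLattice ρ) ≤ W from hUW) with h | h
  · exact .inl (congrArg Subtype.val h)
  · exact .inr (congrArg Subtype.val h)

variable [FiniteDimensional ℂ V]

instance : IsCompactlyGenerated (subrepLattice ρ) :=
  CompleteLattice.isCompactlyGenerated_of_wellFoundedGT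

theorem exists_iSupIndep_isIrreducibleSubrep [ComplementedLattice (subrepLattice ρ)] :
    ∃ (ι : Type) (_ : Finite ι) (W : ι → Submodule ℂ V),
      iSupIndep W ∧ iSup W = ⊤ ∧ ∀ i : ι, IsIrreducibleSubrep ρ (W i) := by
  obtain ⟨s, hindep, hsup, hatoms⟩ :=
    exists_sSupIndep_of_sSup_atoms_eq_top (sSup_atoms_eq_top (α := subrepLattice ρ))
  refine ⟨s, (WellFoundedGT.finite_of_sSupIndep hindep).to_subtype, fun i => (i : subrepLattice ρ),
    ?_, ?_, fun i => isIrreducibleSubrep_of_isAtom ρ (hatoms i.2)⟩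
  · intro i
    simpa [CompleteSublattice.disjoint_iff] using (sSupIndep_iff s).1 hindep i
  · rw [← CompleteSublattice.coe_top, ← hsup, CompleteSublattice.coe_sSup', iSup_subtype']

lemma IsSubrep.map_eq {W : Submodule ℂ V} (hW : IsSubrep ρ W) (x : Q) :
    W.map (ρ x : V →ₗ[ℂ] V) = W :=
  Submodule.eq_of_le_of_finrank_le (Submodule.map_le_iff_le_comap.2 (hW x))
    (LinearEquiv.finrank_map_eq (ρ x) W).ge

end Module

variable {V : Type} [NormedAddCommGroup V] [InnerProductSpace ℂ V] [FiniteDimensional ℂ V]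
  {ρ : Q → V ≃ₗ[ℂ] V} (hunitary : ∀ (x : Q) (v w : V), (inner ℂ (ρ x v) (ρ x w) : ℂ) = inner ℂ v w)
include hunitary

lemma IsSubrep.orthogonal {W : Submodule ℂ V} (hW : IsSubrep ρ W) : IsSubrep ρ Wᗮ := by
  intro x v hv
  rw [Submodule.mem_orthogonal, ← hW.map_eq ρ x]
  rintro _ ⟨u, hu, rfl⟩
  exact (hunitary x u v).trans (hv u hu)

lemma complementedLattice_subrepLattice : ComplementedLattice (subrepLattice ρ) :=
  CompleteSublattice.isComplemented_iff.2 fun W hW =>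
    ⟨Wᗮ, IsSubrep.orthogonal hunitary hW, W.isCompl_orthogonal⟩

end Subrep

theorem unitary_quandle_rep_completely_reducible_general
    {Q : Type} [Quandle Q] {V : Type} [NormedAddCommGroup V] [InnerProductSpace ℂ V]
    [FiniteDimensional ℂ V] (ρ : Q → V ≃ₗ[ℂ] V)
    (hunitary : ∀ (x : Q) (v w : V), (inner ℂ (ρ x v) (ρ x w) : ℂ) = inner ℂ v w) :
    ∃ (ι : Type) (_ : Finite ι) (W : ι → Submodule ℂ V),
      iSupIndep W ∧ iSup W = ⊤ ∧ ∀ i : ι, IsIrreducibleSubrep ρ (W i) :=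
  have := complementedLattice_subrepLattice hunitary
  exists_iSupIndep_isIrreducibleSubrep ρ

/-- A finite-dimensional unitary quandle representation is completely reducible:
`V` is the internal direct sum of a finite family of irreducible subrepresentations. -/
theorem unitary_quandle_rep_completely_reducible
    {Q : Type} [Quandle Q] {V : Type} [NormedAddCommGroup V] [InnerProductSpace ℂ V]
    [FiniteDimensional ℂ V] (ρ : Q → V ≃ₗ[ℂ] V) (hrep : IsQuandleRep ρ)
    (hunitary : ∀ (x : Q) (v w : V), (inner ℂ (ρ x v) (ρ x w) : ℂ) = inner ℂ v w) :
    ∃ (ι : Type) (_ : Finite ι) (W : ι → Submodule ℂ V),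
      iSupIndep W ∧ iSup W = ⊤ ∧ ∀ i : ι, IsIrreducibleSubrep ρ (W i) :=
  unitary_quandle_rep_completely_reducible_general ρ hunitary
end

section
/- Let Q be a finite quandle and let Q/Inn(Q) denote the set of orbits of the action of Inn(Q) on Q. Then the abelianization of the enveloping group G(Q) is isomorphic to the free abelian group on the set Q/Inn(Q), via an isomorphism under which, for every x ∈ Q, the image of the generator φ_Q(x) in the abelianization corresponds to the basis element given by the orbit of x. -/
open Quandles

/-- The inner automorphism group of a quandle `Q`: the subgroup of the permutation
group of `Q` generated by the left translations `L_x : y ↦ x ◃ y`. -/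
def innQ (Q : Type) [Quandle Q] : Subgroup (Equiv.Perm Q) :=
  Subgroup.closure (Set.range (Rack.act' : Q → Q ≃ Q))

/-!
Both groups are the universal abelian group generated by `Q` subject to `x ◃ y = y`:
in an abelian group the relation `x y x⁻¹ = x ◃ y` of `G(Q)` becomes `y = x ◃ y`, and
identifying each `y` with all of its translates `x ◃ y` identifies precisely the points
of an `Inn(Q)`-orbit.
-/

theorem Quandle.conj_act_eq_of_comm {G : Type*} [CommGroup G] (x y : Quandle.Conj G) :
    x ◃ y = y :=
  mul_inv_cancel_comm (x : G) y

theorem Abelianization.of_toEnvelGroup_act {R : Type*} [Rack R] (x y : R) :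
    Abelianization.of (Rack.toEnvelGroup R (x ◃ y)) =
      Abelianization.of (Rack.toEnvelGroup R y) := by
  rw [ShelfHom.map_act, Quandle.conj_act_eq_conj, map_mul, map_mul, map_inv, mul_inv_cancel_comm]

theorem Rack.EnvelGroup.hom_ext {R : Type*} [Rack R] {G : Type*} [Group G]
    {f g : Rack.EnvelGroup R →* G}
    (h : ∀ x, f (Rack.toEnvelGroup R x) = g (Rack.toEnvelGroup R x)) : f = g :=
  Rack.toEnvelGroup.map.symm.injective (ShelfHom.ext (funext h))

theorem MonoidHom.multiplicative_freeAbelianGroup_ext {α M : Type*} [CommGroup M]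
    {f g : Multiplicative (FreeAbelianGroup α) →* M}
    (h : ∀ a, f (Multiplicative.ofAdd (FreeAbelianGroup.of a)) =
      g (Multiplicative.ofAdd (FreeAbelianGroup.of a))) : f = g :=
  AddMonoidHom.toMultiplicativeLeft.symm.injective <| FreeAbelianGroup.lift_ext _ _ h

section Orbits

variable {Q : Type} [Quandle Q]

theorem act'_mem_innQ (x : Q) : Rack.act' x ∈ innQ Q :=
  Subgroup.subset_closure ⟨x, rfl⟩

theorem orbitRel_innQ_act (x y : Q) : MulAction.orbitRel (innQ Q) Q (x ◃ y) y :=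
  ⟨⟨_, act'_mem_innQ x⟩, rfl⟩

theorem apply_eq_of_mem_innQ {α : Type*} {f : Q → α} (hf : ∀ x y, f (x ◃ y) = f y)
    {σ : Equiv.Perm Q} (hσ : σ ∈ innQ Q) (y : Q) : f (σ y) = f y := by
  induction hσ using Subgroup.closure_induction generalizing y with
  | mem σ hσ =>
    obtain ⟨x, rfl⟩ := hσ
    exact hf x y
  | one => rfl
  | mul σ τ _ _ ihσ ihτ => rw [Equiv.Perm.mul_apply, ihσ, ihτ]
  | inv σ _ ihσ => simpa using (ihσ (σ⁻¹ y)).symm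

def innQ.orbitLift {α : Type*} (f : Q → α) (hf : ∀ x y, f (x ◃ y) = f y) :
    MulAction.orbitRel.Quotient (innQ Q) Q → α :=
  Quotient.lift f (by rintro - y ⟨⟨σ, hσ⟩, rfl⟩; exact apply_eq_of_mem_innQ hf hσ y)

variable (Q) in
def toFreeAbelianGroupOrbits : Q →◃
    Quandle.Conj (Multiplicative (FreeAbelianGroup (MulAction.orbitRel.Quotient (innQ Q) Q))) where
  toFun x := Multiplicative.ofAdd (FreeAbelianGroup.of (Quotient.mk _ x))
  map_act' {x y} := by
    rw [Quandle.conj_act_eq_of_comm]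
    exact congrArg (fun o => Multiplicative.ofAdd (FreeAbelianGroup.of o))
      (Quotient.sound (orbitRel_innQ_act x y))

end Orbits

theorem abelianization_envelGroup_iso_freeAbelianGroup_orbits_general
    (Q : Type) [Quandle Q] :
    ∃ e : Abelianization (Rack.EnvelGroup Q) ≃*
        Multiplicative (FreeAbelianGroup (MulAction.orbitRel.Quotient (innQ Q) Q)),
      ∀ x : Q,
        e (Abelianization.of (Rack.toEnvelGroup Q x)) =
          Multiplicative.ofAdd (FreeAbelianGroup.of
            (Quotient.mk (MulAction.orbitRel (innQ Q) Q) x)) := by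
  let toFree := Abelianization.lift (Rack.toEnvelGroup.map (toFreeAbelianGroupOrbits Q))
  let ofFree : Multiplicative (FreeAbelianGroup (MulAction.orbitRel.Quotient (innQ Q) Q)) →*
      Abelianization (Rack.EnvelGroup Q) :=
    AddMonoidHom.toMultiplicativeLeft <| FreeAbelianGroup.lift fun o =>
      Additive.ofMul (innQ.orbitLift (fun x => Abelianization.of (Rack.toEnvelGroup Q x))
        Abelianization.of_toEnvelGroup_act o)
  have toFree_of (x : Q) : toFree (Abelianization.of (Rack.toEnvelGroup Q x)) =
      Multiplicative.ofAdd (FreeAbelianGroup.of (Quotient.mk _ x)) := rfl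
  have ofFree_of (x : Q) :
      ofFree (Multiplicative.ofAdd (FreeAbelianGroup.of (Quotient.mk _ x))) =
        Abelianization.of (Rack.toEnvelGroup Q x) :=
    congrArg Additive.toMul (FreeAbelianGroup.lift_apply_of _ _)
  refine ⟨toFree.toMulEquiv ofFree ?_ ?_, toFree_of⟩
  · exact Abelianization.hom_ext _ _ <| Rack.EnvelGroup.hom_ext fun x => by
      simp only [MonoidHom.comp_apply, toFree_of, ofFree_of, MonoidHom.id_apply]
  · exact MonoidHom.multiplicative_freeAbelianGroup_ext <| Quotient.ind fun x => by
      simp only [MonoidHom.comp_apply, ofFree_of, toFree_of, MonoidHom.id_apply]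

/-- For a finite quandle `Q`, the abelianization of the enveloping group `G(Q)` is
isomorphic to the free abelian group on the set of orbits `Q/Inn(Q)`, via an isomorphism
sending the class of the generator `φ_Q(x)` to the basis element given by the orbit of `x`. -/
theorem abelianization_envelGroup_iso_freeAbelianGroup_orbits
    (Q : Type) [Quandle Q] [Finite Q] :
    ∃ e : Abelianization (Rack.EnvelGroup Q) ≃*
        Multiplicative (FreeAbelianGroup (MulAction.orbitRel.Quotient (innQ Q) Q)),
      ∀ x : Q,
        e (Abelianization.of (Rack.toEnvelGroup Q x)) =
          Multiplicative.ofAdd (FreeAbelianGroup.of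
            (Quotient.mk (MulAction.orbitRel (innQ Q) Q) x)) :=
  abelianization_envelGroup_iso_freeAbelianGroup_orbits_general Q
end

section
/- For a finite quandle Q, the commutator (derived) subgroup of the enveloping group G(Q) is a finite group. -/
/-!
The enveloping group `G(Q)` acts on `Q` through `Rack.envelAction : G(Q) →* Equiv.Perm Q`.
Since `g x g⁻¹ = g • x` for every generator `x ∈ Q`, the kernel of this action centralizes the
generators and is therefore central; so the center of `G(Q)` has finite index when `Q` is finite.
A commutator `⁅g, h⁆` only depends on the cosets of `g` and `h` modulo the center, hence `G(Q)`
has only finitely many commutators, and Schur's theorem makes the commutator subgroup finite.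
-/

open Subgroup
open scoped commutatorElement

theorem commutatorElement_mul_mul_of_mem_center {G : Type*} [Group G] (g h : G) {z w : G}
    (hz : z ∈ center G) (hw : w ∈ center G) : ⁅g * z, h * w⁆ = ⁅g, h⁆ := by
  have hz' := mem_center_iff.mp hz
  have hw' := mem_center_iff.mp hw
  calc ⁅g * z, h * w⁆ = g * (z * (h * w) * z⁻¹) * g⁻¹ * (w⁻¹ * h⁻¹) := by group
    _ = g * h * (w * g⁻¹ * w⁻¹) * h⁻¹ := by rw [← hz' (h * w)]; group
    _ = ⁅g, h⁆ := by rw [← hw' g⁻¹]; group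

theorem finite_commutatorSet_of_finiteIndex_center (G : Type*) [Group G]
    [(center G).FiniteIndex] : Finite (commutatorSet G) := by
  let commutatorOfCosets (p : (G ⧸ center G) × (G ⧸ center G)) : G := ⁅p.1.out, p.2.out⁆
  refine (Set.finite_range commutatorOfCosets).subset ?_
  rintro - ⟨g, h, rfl⟩
  obtain ⟨z, hz⟩ := QuotientGroup.mk_out_eq_mul (center G) g
  obtain ⟨w, hw⟩ := QuotientGroup.mk_out_eq_mul (center G) h
  exact ⟨(g, h), by simp only [commutatorOfCosets, hz, hw,
    commutatorElement_mul_mul_of_mem_center g h z.2 w.2]⟩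

namespace Rack

variable {R : Type*} [Rack R]

theorem closure_range_toEnvelGroup : closure (Set.range (toEnvelGroup R)) = ⊤ := by
  refine eq_top_iff.mpr fun g _ => Quotient.inductionOn g fun a => ?_
  change (⟦a⟧ : EnvelGroup R) ∈ _
  induction a with
  | unit => exact one_mem _
  | incl x => exact subset_closure ⟨x, rfl⟩
  | mul a b ha hb => exact mul_mem ha hb
  | inv a ha => exact inv_mem ha

theorem conj_toEnvelGroup (g : EnvelGroup R) (x : R) :
    g * toEnvelGroup R x * g⁻¹ = toEnvelGroup R (envelAction g x) := by
  have hg : g ∈ closure (Set.range (toEnvelGroup R)) :=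
    closure_range_toEnvelGroup (R := R) ▸ mem_top g
  induction hg using closure_induction generalizing x with
  | mem _ hy =>
    obtain ⟨y, rfl⟩ := hy
    exact ((toEnvelGroup R).map_act (x := y) (y := x)).symm
  | one => simp
  | mul a b _ _ ha hb =>
    rw [map_mul, Equiv.Perm.mul_apply, ← ha, ← hb]
    group
  | inv a _ ha =>
    have hx := ha (envelAction a⁻¹ x)
    rw [← Equiv.Perm.mul_apply, ← map_mul, mul_inv_cancel, map_one, Equiv.Perm.one_apply] at hx
    rw [← hx]
    group

theorem ker_envelAction_le_center : (envelAction (R := R)).ker ≤ center (EnvelGroup R) := by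
  rw [← centralizer_univ, ← coe_top, ← closure_range_toEnvelGroup, centralizer_closure]
  intro g hg
  rw [mem_centralizer_iff]
  rintro - ⟨x, rfl⟩
  have hconj := conj_toEnvelGroup g x
  rw [MonoidHom.mem_ker.mp hg, Equiv.Perm.one_apply] at hconj
  exact (mul_inv_eq_iff_eq_mul.mp hconj).symm

end Rack

/-- For a finite quandle `Q`, the commutator (derived) subgroup of the enveloping
group `G(Q)` is finite. -/
theorem commutator_envelGroup_finite (Q : Type) [Quandle Q] [Finite Q] :
    Finite (commutator (Rack.EnvelGroup Q)) := by
  have : (center (Rack.EnvelGroup Q)).FiniteIndex :=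
    finiteIndex_of_le Rack.ker_envelAction_le_center
  have := finite_commutatorSet_of_finiteIndex_center (Rack.EnvelGroup Q)
  infer_instance
end

section
/- Let G be a group, Z a subgroup of the centre of G such that the quotient G/Z is finite, V a finite-dimensional complex vector space, and ρ : G → GL(V) a group representation. Then every element of ρ(Z) is diagonalizable if and only if every element of ρ(G) is diagonalizable. -/
/-!
Some power `g ^ n` with `n > 0` lies in `Z`, since `Z` has finite index. If `ρ(g) ^ n` is
diagonalizable with (necessarily nonzero) eigenvalues `c`, then `ρ(g)` is annihilated by
`∏ (X ^ n - c)`, which is separable in characteristic zero; hence `ρ(g)` is semisimple, and a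
semisimple endomorphism of a finite-dimensional complex space is diagonalizable.
-/

/-- A linear endomorphism of a complex vector space is diagonalizable if the space
admits a basis of eigenvectors. -/
def IsDiagonalizable {V : Type} [AddCommGroup V] [Module ℂ V] (f : V →ₗ[ℂ] V) : Prop :=
  ∃ (ι : Type) (b : Module.Basis ι ℂ V), ∀ i : ι, ∃ μ : ℂ, f (b i) = μ • b i

open Polynomial Module.End

theorem Polynomial.separable_expand_prod_X_sub_C {K : Type*} [Field K] {n : ℕ}
    (hn : (n : K) ≠ 0) {s : Finset K} (hs : 0 ∉ s) :
    (expand K n (∏ c ∈ s, (X - C c))).Separable := by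
  have hexpand : ∀ c : K, expand K n (X - C c) = X ^ n - C c := fun c => by
    rw [map_sub, expand_X, expand_C]
  rw [map_prod]
  refine separable_prod' (fun a _ b _ hab => ?_) (fun c hc => ?_)
  · simpa only [id_eq, RingHom.coe_coe, hexpand] using
      (pairwise_coprime_X_sub_C (s := id) Function.injective_id hab).map
        (expand K n : K[X] →+* K[X])
  · rw [hexpand]
    exact separable_X_pow_sub_C c hn (ne_of_mem_of_not_mem hc hs)

section

variable {V : Type} [AddCommGroup V] [Module ℂ V]

theorem IsDiagonalizable.aeval_eq_zero {f : Module.End ℂ V} (hf : IsDiagonalizable f)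
    {p : ℂ[X]} (hp : ∀ μ, f.HasEigenvalue μ → p.IsRoot μ) : aeval f p = 0 := by
  obtain ⟨ι, b, hb⟩ := hf
  refine b.ext fun i => ?_
  obtain ⟨μ, hμ⟩ := hb i
  have hvec : f.HasEigenvector μ (b i) := ⟨mem_eigenspace_iff.mpr hμ, b.ne_zero i⟩
  rw [aeval_apply_of_hasEigenvector hvec, (hp μ (hasEigenvalue_of_hasEigenvector hvec)).eq_zero,
    zero_smul, LinearMap.zero_apply]

variable [FiniteDimensional ℂ V]

theorem Module.End.IsSemisimple.isDiagonalizable {f : Module.End ℂ V} (hf : f.IsSemisimple) :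
    IsDiagonalizable f := by
  have hint : DirectSum.IsInternal f.eigenspace :=
    (DirectSum.isInternal_submodule_iff_iSupIndep_and_iSup_eq_top _).mpr
      ⟨f.eigenspaces_iSupIndep, hf.iSup_eigenspace_eq_top⟩
  let v (μ : ℂ) := Module.Free.chooseBasis ℂ (f.eigenspace μ)
  exact ⟨_, hint.collectedBasis v,
    fun i => ⟨i.1, mem_eigenspace_iff.mp (hint.collectedBasis_mem v i)⟩⟩

theorem Module.End.isSemisimple_of_isDiagonalizable_pow {f : Module.End ℂ V}
    (hf : Function.Injective f) {n : ℕ} (hn : n ≠ 0) (hdiag : IsDiagonalizable (f ^ n)) :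
    f.IsSemisimple := by
  set s := (f ^ n).finite_hasEigenvalue.toFinset
  have hs : 0 ∉ s := by
    intro h0
    obtain ⟨x, hx⟩ := (Set.Finite.mem_toFinset _).mp h0 |>.exists_hasEigenvector
    have hfx : (f ^ n) x = (f ^ n) 0 := by rw [hx.apply_eq_smul, zero_smul, map_zero]
    rw [coe_pow] at hfx
    exact hx.2 (hf.iterate n hfx)
  refine isSemisimple_of_squarefree_aeval_eq_zero
    (separable_expand_prod_X_sub_C (by exact_mod_cast hn) hs).squarefree ?_
  rw [expand_aeval]
  refine hdiag.aeval_eq_zero fun μ hμ => ?_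
  simpa [eval_prod, Finset.prod_eq_zero_iff, sub_eq_zero, s] using hμ

end

theorem diagonalizable_on_central_subgroup_iff_general {G : Type} [Group G]
    (Z : Subgroup G) [Finite (G ⧸ Z)]
    {V : Type} [AddCommGroup V] [Module ℂ V] [FiniteDimensional ℂ V]
    (ρ : G →* (V ≃ₗ[ℂ] V)) :
    (∀ z ∈ Z, IsDiagonalizable (ρ z : V →ₗ[ℂ] V)) ↔
      ∀ g : G, IsDiagonalizable (ρ g : V →ₗ[ℂ] V) := by
  refine ⟨fun hZ g => ?_, fun h z _ => h z⟩
  obtain ⟨n, hn, -, hgn⟩ := Z.exists_pow_mem_of_index_ne_zero Subgroup.index_ne_zero_of_finite g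
  have hpow : IsDiagonalizable ((ρ g : V →ₗ[ℂ] V) ^ n) := by
    simpa only [map_pow, ← LinearEquiv.automorphismGroup.toLinearMapMonoidHom_apply] using
      hZ _ hgn
  exact (isSemisimple_of_isDiagonalizable_pow (ρ g).injective hn.ne' hpow).isDiagonalizable

/-- Let `Z` be a central subgroup of a group `G` with `G/Z` finite, and let
`ρ : G → GL(V)` be a finite-dimensional complex representation.  Every element of
`ρ(Z)` is diagonalizable if and only if every element of `ρ(G)` is diagonalizable. -/
theorem diagonalizable_on_central_subgroup_iff {G : Type} [Group G]
    (Z : Subgroup G) (hZ : Z ≤ Subgroup.center G) [Finite (G ⧸ Z)]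
    {V : Type} [AddCommGroup V] [Module ℂ V] [FiniteDimensional ℂ V]
    (ρ : G →* (V ≃ₗ[ℂ] V)) :
    (∀ z ∈ Z, IsDiagonalizable (ρ z : V →ₗ[ℂ] V)) ↔
      ∀ g : G, IsDiagonalizable (ρ g : V →ₗ[ℂ] V) :=
  diagonalizable_on_central_subgroup_iff_general Z ρ
end

section
/- Let G be a group, Z a subgroup of the centre of G such that the quotient G/Z is finite, V a finite-dimensional complex vector space, and ρ : G → GL(V) a group representation. Then ρ is completely reducible (V is the internal direct sum of a family of G-invariant subspaces each of which has no G-invariant subspaces other than 0 and itself) if and only if every element of ρ(G) is diagonalizable. -/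
/-- `W` is invariant under the group representation `ρ`. -/
def IsGroupSubrep {G : Type} [Group G] {V : Type} [AddCommGroup V] [Module ℂ V]
    (ρ : G →* (V ≃ₗ[ℂ] V)) (W : Submodule ℂ V) : Prop :=
  ∀ g : G, ∀ v ∈ W, ρ g v ∈ W

/-- The group representation `ρ` is completely reducible: `V` is the internal direct
sum of a family of invariant subspaces each of which has no invariant subspaces other
than `0` and itself. -/
def CompletelyReducibleGroupRep {G : Type} [Group G] {V : Type} [AddCommGroup V]
    [Module ℂ V] (ρ : G →* (V ≃ₗ[ℂ] V)) : Prop :=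
  ∃ (ι : Type) (W : ι → Submodule ℂ V),
    iSupIndep W ∧ iSup W = ⊤ ∧
    ∀ i : ι, IsGroupSubrep ρ (W i) ∧
      ∀ U : Submodule ℂ V, U ≤ W i → IsGroupSubrep ρ U → U = ⊥ ∨ U = W i

/-!
If `V` is a direct sum of irreducible invariant subspaces `W`, take `g ∈ G` and `n = [G : Z]`.
Then `g ^ n` lies in `Z`, hence in the centre, so by Schur's lemma it acts on each `W` as a
scalar `c ≠ 0`, and `ρ g` restricted to `W` is annihilated by the separable polynomial
`X ^ n - c`: it is diagonalizable, hence so is `ρ g`.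

Conversely, if the commuting operators `ρ z` (`z ∈ Z`) are diagonalizable, `V` is the sum of
their joint eigenspaces `V_χ`, which are invariant because `Z` is central. As `Z` acts on `V_χ`
by scalars, any projection onto an invariant subspace `U ≤ V_χ` commutes with `ρ(Z)` on `V_χ`,
so Maschke's averaging of its conjugates over representatives of `G ⧸ Z` is well defined and
yields an invariant complement of `U` in `V_χ`. Hence `V` is a semisimple `ℂ[G]`-module, i.e. a
direct sum of irreducible invariant subspaces.
-/

open Module

open scoped MonoidAlgebra

lemma Subgroup.normal_of_le_center {G : Type*} [Group G] {Z : Subgroup G}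
    (hZ : Z ≤ Subgroup.center G) : Z.Normal :=
  ⟨fun z hz g => by rwa [Subgroup.mem_center_iff.mp (hZ hz) g, mul_inv_cancel_right]⟩

lemma iSupIndep.map_completeLatticeHom {ι α β : Type*} [CompleteLattice α] [CompleteLattice β]
    {t : ι → α} (ht : iSupIndep t) (f : CompleteLatticeHom α β) : iSupIndep (f ∘ t) := by
  intro i
  simpa only [Function.comp_apply, map_iSup] using (ht i).map f

namespace Module.End

variable {K M : Type*} [Field K] [AddCommGroup M] [Module K M]

lemma isSemisimple_of_pow_eq_algebraMap {f : End K M} {n : ℕ} (hn : (n : K) ≠ 0) {c : K}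
    (hc : c ≠ 0) (h : f ^ n = algebraMap K (End K M) c) : f.IsSemisimple :=
  isSemisimple_of_squarefree_aeval_eq_zero (Polynomial.separable_X_pow_sub_C c hn hc).squarefree
    (by simp [h])

variable [IsAlgClosed K] [FiniteDimensional K M]

lemma le_iSup_eigenspace_of_isSemisimple_restrict {f : End K M} {W : Submodule K M}
    (hW : W ∈ f.invtSubmodule) (h : IsSemisimple (f.restrict hW)) :
    W ≤ ⨆ μ, f.eigenspace μ :=
  calc W = (⊤ : Submodule K W).map W.subtype := W.map_subtype_top.symm
    _ = ⨆ μ, (eigenspace (f.restrict hW) μ).map W.subtype := by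
      rw [← h.iSup_eigenspace_eq_top, Submodule.map_iSup]
    _ ≤ ⨆ μ, f.eigenspace μ := iSup_mono fun μ => f.eigenspace_restrict_le_eigenspace hW μ

lemma iSup_iInf_eigenspace_eq_top_of_commute {ι : Type*} (f : ι → End K M)
    (hcomm : Pairwise fun i j => Commute (f i) (f j)) (hss : ∀ i, (f i).IsSemisimple) :
    ⨆ χ : ι → K, ⨅ i, (f i).eigenspace (χ i) = ⊤ := by
  simpa only [(hss _).isFinitelySemisimple.maxGenEigenspace_eq_eigenspace] using
    iSup_iInf_maxGenEigenspace_eq_top_of_iSup_maxGenEigenspace_eq_top_of_commute f hcomm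
      fun i => iSup_maxGenEigenspace_eq_top (f i)

end Module.End

namespace Representation

variable {k G V : Type*} [Field k] [Group G] [AddCommGroup V] [Module k V]

section

variable {ρ : Representation k G V}

lemma apply_mem_of_mem_invtSubmodule {p : Submodule k V} (hp : p ∈ ρ.invtSubmodule) (g : G)
    {v : V} (hv : v ∈ p) : ρ g v ∈ p :=
  ρ.mem_invtSubmodule.mp hp g hv

lemma iInf_mem_invtSubmodule {ι : Sort*} {p : ι → Submodule k V}
    (hp : ∀ i, p i ∈ ρ.invtSubmodule) : (⨅ i, p i) ∈ ρ.invtSubmodule :=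
  ρ.mem_invtSubmodule.mpr fun g _ hv => Submodule.mem_iInf _ |>.mpr fun i =>
    apply_mem_of_mem_invtSubmodule (hp i) g (Submodule.mem_iInf _ |>.mp hv i)

lemma eigenspace_mem_invtSubmodule_of_mem_center {z : G} (hz : z ∈ Subgroup.center G) (c : k) :
    End.eigenspace (ρ z) c ∈ ρ.invtSubmodule := by
  refine ρ.mem_invtSubmodule.mpr fun g _ hv => End.mem_eigenspace_iff.mpr ?_
  rw [← End.mul_apply, ← map_mul, ← Subgroup.mem_center_iff.mp hz g, map_mul,
    End.mul_apply, End.mem_eigenspace_iff.mp hv, map_smul]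

lemma iSup_mapSubmodule_eq_top {ι : Sort*} {p : ι → ρ.invtSubmodule}
    (hp : ⨆ i, (p i : Submodule k V) = ⊤) : ⨆ i, ρ.mapSubmodule (p i) = ⊤ := by
  set N := ⨆ i, ρ.mapSubmodule (p i)
  have hle : ⨆ i, (p i : Submodule k V) ≤ ρ.mapSubmodule.symm N :=
    iSup_le fun i => ρ.mapSubmodule.le_symm_apply.mpr (le_iSup (fun i => ρ.mapSubmodule (p i)) i)
  have htop : ρ.mapSubmodule.symm N = ⊤ := by
    rw [hp] at hle
    exact eq_top_iff.mpr hle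
  rw [← ρ.mapSubmodule.apply_symm_apply N, htop, map_top]

end

section Averaging

variable {ρ : Representation k G V} {H : Subgroup G} {p U : Submodule k V} {π : End k V}

lemma conj_apply_eq_of_mk_eq (hp : p ∈ ρ.invtSubmodule)
    (hπ : ∀ h ∈ H, ∀ v ∈ p, π (ρ h v) = ρ h (π v)) {g g' : G} (hgg' : (g : G ⧸ H) = g')
    {v : V} (hv : v ∈ p) : ρ g' (π (ρ g'⁻¹ v)) = ρ g (π (ρ g⁻¹ v)) := by
  obtain ⟨h, hh, rfl⟩ : ∃ h ∈ H, g * h = g' := ⟨g⁻¹ * g', QuotientGroup.eq.mp hgg', by group⟩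
  have hw : ρ h⁻¹ (ρ g⁻¹ v) ∈ p :=
    apply_mem_of_mem_invtSubmodule hp _ (apply_mem_of_mem_invtSubmodule hp _ hv)
  simp only [mul_inv_rev, map_mul, End.mul_apply, ← hπ h hh _ hw, self_inv_apply]

variable (ρ H) in
noncomputable def sumConjugates [Fintype (G ⧸ H)] (π : End k V) : End k V :=
  ∑ c : G ⧸ H, ρ c.out * π * ρ c.out⁻¹

variable [Fintype (G ⧸ H)]

lemma sumConjugates_apply_comm (hp : p ∈ ρ.invtSubmodule)
    (hπ : ∀ h ∈ H, ∀ v ∈ p, π (ρ h v) = ρ h (π v)) (x : G) {v : V} (hv : v ∈ p) :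
    ρ.sumConjugates H π (ρ x v) = ρ x (ρ.sumConjugates H π v) := by
  simp only [sumConjugates, LinearMap.sum_apply, End.mul_apply, map_sum]
  rw [← Equiv.sum_comp (MulAction.toPerm x)]
  refine Finset.sum_congr rfl fun c _ => ?_
  have hc : ((x * c.out : G) : G ⧸ H) = (x • c).out := by
    rw [QuotientGroup.out_eq']
    exact congrArg (x • ·) (QuotientGroup.out_eq' c)
  rw [MulAction.toPerm_apply,
    conj_apply_eq_of_mk_eq hp hπ hc (apply_mem_of_mem_invtSubmodule hp x hv)]
  simp

lemma sumConjugates_apply_of_mem (hU : U ∈ ρ.invtSubmodule) (hπU : ∀ u ∈ U, π u = u) {u : V}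
    (hu : u ∈ U) : ρ.sumConjugates H π u = H.index • u := by
  simp [sumConjugates, hπU _ (apply_mem_of_mem_invtSubmodule hU _ hu), Subgroup.index_eq_card]

lemma sumConjugates_apply_mem (hU : U ∈ ρ.invtSubmodule) (hπU : ∀ v, π v ∈ U) (v : V) :
    ρ.sumConjugates H π v ∈ U := by
  simp only [sumConjugates, LinearMap.sum_apply, End.mul_apply]
  exact Submodule.sum_mem _ fun c _ => apply_mem_of_mem_invtSubmodule hU _ (hπU _)

end Averaging

section Maschke

variable {ρ : Representation k G V} {H : Subgroup G}

theorem exists_invtSubmodule_compl_of_forall_smul {p U : Submodule k V}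
    (hindex : (H.index : k) ≠ 0) (hH : ∀ h ∈ H, ∃ c : k, ∀ v ∈ p, ρ h v = c • v)
    (hp : p ∈ ρ.invtSubmodule) (hU : U ∈ ρ.invtSubmodule) (hUp : U ≤ p) :
    ∃ C ∈ ρ.invtSubmodule, C ≤ p ∧ U ⊓ C = ⊥ ∧ U ⊔ C = p := by
  -- `H.index = 0` when the index is infinite, so `hindex` also says that `G ⧸ H` is finite.
  have : H.FiniteIndex := ⟨fun h => hindex (by simp [h])⟩
  have := Fintype.ofFinite (G ⧸ H)
  obtain ⟨C₀, hC₀⟩ := U.exists_isCompl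
  set π := U.projection C₀ hC₀
  have hπU : ∀ v, π v ∈ U := U.projection_apply_mem hC₀
  have hπH : ∀ h ∈ H, ∀ v ∈ p, π (ρ h v) = ρ h (π v) := by
    intro h hh v hv
    obtain ⟨c, hc⟩ := hH h hh
    rw [hc v hv, map_smul, hc _ (hUp (hπU v))]
  set P := (H.index : k)⁻¹ • ρ.sumConjugates H π
  have hPU : ∀ v, P v ∈ U := fun v => U.smul_mem _ (sumConjugates_apply_mem hU hπU v)
  have hP : ∀ u ∈ U, P u = u := fun u hu => by
    rw [LinearMap.smul_apply, sumConjugates_apply_of_mem hU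
      (fun u hu => U.projection_apply_of_mem_left hC₀ hu) hu, ← Nat.cast_smul_eq_nsmul k,
      inv_smul_smul₀ hindex]
  have hPρ : ∀ g, ∀ v ∈ p, P (ρ g v) = ρ g (P v) := fun g v hv => by
    rw [LinearMap.smul_apply, sumConjugates_apply_comm hp hπH g hv, LinearMap.smul_apply,
      map_smul]
  refine ⟨p ⊓ LinearMap.ker P, ?_, inf_le_left, ?_, ?_⟩
  · refine ρ.mem_invtSubmodule.mpr fun g v hv => Submodule.mem_inf.mpr
      ⟨apply_mem_of_mem_invtSubmodule hp g hv.1, LinearMap.mem_ker.mpr ?_⟩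
    rw [hPρ g v hv.1, LinearMap.mem_ker.mp hv.2, map_zero]
  · refine eq_bot_iff.mpr fun v hv => ?_
    rw [← hP v hv.1, LinearMap.mem_ker.mp hv.2.2]
    exact Submodule.zero_mem _
  · refine le_antisymm (sup_le hUp inf_le_left) fun v hv => ?_
    rw [← add_sub_cancel (P v) v]
    refine Submodule.add_mem_sup (hPU v) (Submodule.mem_inf.mpr
      ⟨p.sub_mem hv (hUp (hPU v)), LinearMap.mem_ker.mpr ?_⟩)
    rw [map_sub, hP _ (hPU v), sub_self]

variable (ρ) in
lemma isSemisimpleModule_mapSubmodule_iff (p : ρ.invtSubmodule) :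
    IsSemisimpleModule k[G] (ρ.mapSubmodule p) ↔ ComplementedLattice (Set.Iic p) :=
  (isSemisimpleModule_iff _ _).trans <| (Submodule.mapIic _).complementedLattice_iff.trans
    (ρ.mapSubmodule.Iic p).complementedLattice_iff.symm

lemma isSemisimpleModule_mapSubmodule_of_forall_smul (hindex : (H.index : k) ≠ 0)
    {p : ρ.invtSubmodule} (hH : ∀ h ∈ H, ∃ c : k, ∀ v ∈ (p : Submodule k V), ρ h v = c • v) :
    IsSemisimpleModule k[G] (ρ.mapSubmodule p) := by
  rw [isSemisimpleModule_mapSubmodule_iff, Set.Iic.complementedLattice_iff]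
  rintro ⟨U, hU⟩ hUp
  obtain ⟨C, hC, hCp, hinf, hsup⟩ :=
    exists_invtSubmodule_compl_of_forall_smul hindex hH p.2 hU hUp
  exact ⟨⟨C, hC⟩, hCp, Subtype.ext hinf, Subtype.ext hsup⟩

theorem isSemisimpleModule_asModule_of_isSemisimple [IsAlgClosed k] [FiniteDimensional k V]
    {Z : Subgroup G} (hZ : Z ≤ Subgroup.center G) (hindex : (Z.index : k) ≠ 0)
    (hss : ∀ z ∈ Z, End.IsSemisimple (ρ z)) : IsSemisimpleModule k[G] ρ.asModule := by
  let E (χ : Z → k) : ρ.invtSubmodule :=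
    ⟨⨅ z : Z, End.eigenspace (ρ z) (χ z),
      iInf_mem_invtSubmodule fun z => eigenspace_mem_invtSubmodule_of_mem_center (hZ z.2) _⟩
  have hcomm : Pairwise fun z₁ z₂ : Z => Commute (ρ z₁) (ρ z₂) := fun z₁ z₂ _ =>
    Commute.map (Subgroup.mem_center_iff.mp (hZ z₂.2) z₁) ρ
  refine isSemisimpleModule_of_isSemisimpleModule_submodule' (fun χ => ?_)
    (iSup_mapSubmodule_eq_top (p := E)
      (End.iSup_iInf_eigenspace_eq_top_of_commute _ hcomm fun z => hss z z.2))
  exact isSemisimpleModule_mapSubmodule_of_forall_smul hindex fun z hz => ⟨χ ⟨z, hz⟩,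
    fun v hv => End.mem_eigenspace_iff.mp (Submodule.mem_iInf _ |>.mp hv ⟨z, hz⟩)⟩

end Maschke

section Irreducible

variable [IsAlgClosed k] [FiniteDimensional k V] {ρ : Representation k G V} {W : Submodule k V}

lemma exists_forall_apply_eq_smul_of_mem_center (hW : W ∈ ρ.invtSubmodule)
    (hirr : ∀ U, U ≤ W → U ∈ ρ.invtSubmodule → U = ⊥ ∨ U = W) {z : G}
    (hz : z ∈ Subgroup.center G) : ∃ c : k, ∀ v ∈ W, ρ z v = c • v := by
  rcases eq_or_ne W ⊥ with rfl | hne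
  · exact ⟨0, by simp⟩
  have : Nontrivial W := Submodule.nontrivial_iff_ne_bot.mpr hne
  obtain ⟨c, hc⟩ := End.exists_eigenvalue ((ρ z).restrict (ρ.mem_invtSubmodule.mp hW z))
  have hE : W ⊓ End.eigenspace (ρ z) c ≠ ⊥ := by
    obtain ⟨⟨v, hvW⟩, hv⟩ := hc.exists_hasEigenvector
    refine (Submodule.ne_bot_iff _).mpr ⟨v, Submodule.mem_inf.mpr ⟨hvW, ?_⟩,
      fun h => hv.2 (Subtype.ext h)⟩
    exact End.eigenspace_restrict_le_eigenspace _ _ _ ⟨⟨v, hvW⟩, hv.1, rfl⟩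
  have hEW : W ⊓ End.eigenspace (ρ z) c = W := (hirr _ inf_le_left
    (ρ.invtSubmodule.inf_mem hW (eigenspace_mem_invtSubmodule_of_mem_center hz c))).resolve_left hE
  exact ⟨c, fun v hv => End.mem_eigenspace_iff.mp (hEW.symm ▸ hv : v ∈ W ⊓ _).2⟩

theorem le_iSup_eigenspace_of_irreducible (hW : W ∈ ρ.invtSubmodule)
    (hirr : ∀ U, U ≤ W → U ∈ ρ.invtSubmodule → U = ⊥ ∨ U = W) {Z : Subgroup G}
    (hZ : Z ≤ Subgroup.center G) (hindex : (Z.index : k) ≠ 0) (g : G) :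
    W ≤ ⨆ μ, End.eigenspace (ρ g) μ := by
  rcases eq_or_ne W ⊥ with rfl | hne
  · exact bot_le
  have := Subgroup.normal_of_le_center hZ
  obtain ⟨c, hc⟩ := exists_forall_apply_eq_smul_of_mem_center hW hirr (hZ (Z.pow_index_mem g))
  have hc0 : c ≠ 0 := by
    rintro rfl
    obtain ⟨w, hw, hw0⟩ := Submodule.exists_mem_ne_zero_of_ne_bot hne
    have := ρ.inv_self_apply (g ^ Z.index) w
    rw [hc w hw, zero_smul, map_zero] at this
    exact hw0 this.symm
  have hWg : ∀ v ∈ W, ρ g v ∈ W := fun _ => apply_mem_of_mem_invtSubmodule hW g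
  refine End.le_iSup_eigenspace_of_isSemisimple_restrict hWg
    (End.isSemisimple_of_pow_eq_algebraMap hindex hc0 ?_)
  ext ⟨v, hv⟩
  rw [End.pow_restrict, LinearMap.coe_restrict_apply, ← map_pow, hc v hv]
  rfl

end Irreducible

end Representation

def MonoidHom.toRepresentation {k G V : Type*} [CommSemiring k] [Monoid G] [AddCommMonoid V]
    [Module k V] (ρ : G →* (V ≃ₗ[k] V)) : Representation k G V :=
  LinearEquiv.automorphismGroup.toLinearMapMonoidHom.comp ρ

section Complex

variable {G V : Type} [Group G] [AddCommGroup V] [Module ℂ V]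

lemma isGroupSubrep_iff_mem_invtSubmodule (ρ : G →* (V ≃ₗ[ℂ] V)) (W : Submodule ℂ V) :
    IsGroupSubrep ρ W ↔ W ∈ ρ.toRepresentation.invtSubmodule := by
  simp [IsGroupSubrep, Representation.mem_invtSubmodule,
    End.mem_invtSubmodule_iff_forall_mem_of_mem, MonoidHom.toRepresentation]

lemma isDiagonalizable_of_iSup_eigenspace_eq_top {f : V →ₗ[ℂ] V}
    (h : ⨆ μ, End.eigenspace f μ = ⊤) : IsDiagonalizable f := by
  classical
  have hint : DirectSum.IsInternal fun μ => End.eigenspace f μ :=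
    DirectSum.isInternal_submodule_of_iSupIndep_of_iSup_eq_top (End.eigenspaces_iSupIndep f) h
  let b μ := Basis.ofVectorSpace ℂ (End.eigenspace f μ)
  exact ⟨_, hint.collectedBasis b, fun ⟨μ, i⟩ =>
    ⟨μ, End.mem_eigenspace_iff.mp (hint.collectedBasis_mem b ⟨μ, i⟩)⟩⟩

lemma IsDiagonalizable.isSemisimple [FiniteDimensional ℂ V] {f : V →ₗ[ℂ] V}
    (h : IsDiagonalizable f) : End.IsSemisimple f := by
  classical
  obtain ⟨ι, b, hb⟩ := h
  have := FiniteDimensional.fintypeBasisIndex b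
  choose μ hμ using hb
  refine End.isSemisimple_of_squarefree_aeval_eq_zero
    (Polynomial.separable_prod_X_sub_C_iff'.mpr fun _ _ _ _ h => h).squarefree
    (p := ∏ c ∈ Finset.univ.image μ, (Polynomial.X - Polynomial.C c)) (b.ext fun i => ?_)
  rw [← Finset.prod_erase_mul _ _ (Finset.mem_image_of_mem μ (Finset.mem_univ i)), map_mul,
    End.mul_apply]
  simp [hμ i]

lemma completelyReducibleGroupRep_of_isSemisimpleModule (ρ : G →* (V ≃ₗ[ℂ] V))
    [IsSemisimpleModule ℂ[G] ρ.toRepresentation.asModule] : CompletelyReducibleGroupRep ρ := by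
  set σ := ρ.toRepresentation
  obtain ⟨s, hind, htop, hsimple⟩ :=
    IsSemisimpleModule.exists_sSupIndep_sSup_simples_eq_top ℂ[G] σ.asModule
  let F : CompleteLatticeHom (Submodule ℂ[G] σ.asModule) (Submodule ℂ V) :=
    (CompleteLatticeHom.OrderIso.toCompleteLatticeHom
      (Submodule.orderIsoMapComap σ.asModuleEquiv.symm).symm).comp
      (Submodule.restrictScalarsLatticeHom ℂ ℂ[G] σ.asModule)
  have hW (m : Submodule ℂ[G] σ.asModule) : (σ.mapSubmodule.symm m : Submodule ℂ V) = F m :=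
    rfl
  refine ⟨s, fun m => σ.mapSubmodule.symm m, ?_, ?_, fun m =>
    ⟨(isGroupSubrep_iff_mem_invtSubmodule ρ _).mpr (σ.mapSubmodule.symm m).2, ?_⟩⟩
  · simp only [hW]
    exact ((sSupIndep_iff s).mp hind).map_completeLatticeHom _
  · simp only [hW]
    rw [← map_iSup, ← sSup_eq_iSup', htop, map_top]
  · intro U hUm hU
    let U' : σ.invtSubmodule := ⟨U, (isGroupSubrep_iff_mem_invtSubmodule ρ U).mp hU⟩
    have hatom := isSimpleModule_iff_isAtom.mp (hsimple m m.2)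
    rcases hatom.le_iff.mp (σ.mapSubmodule.le_symm_apply.mp (show U' ≤ _ from hUm)) with h | h
    · exact .inl (congrArg Subtype.val (σ.mapSubmodule.injective (h.trans (map_bot _).symm)))
    · exact .inr (congrArg Subtype.val (σ.mapSubmodule.eq_symm_apply.mpr h))

end Complex

/-- Let `Z` be a central subgroup of a group `G` with `G/Z` finite, and let
`ρ : G → GL(V)` be a finite-dimensional complex representation.  Then `ρ` is completely
reducible if and only if every element of `ρ(G)` is diagonalizable. -/
theorem completelyReducible_iff_diagonalizable {G : Type} [Group G]
    (Z : Subgroup G) (hZ : Z ≤ Subgroup.center G) [Finite (G ⧸ Z)]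
    {V : Type} [AddCommGroup V] [Module ℂ V] [FiniteDimensional ℂ V]
    (ρ : G →* (V ≃ₗ[ℂ] V)) :
    CompletelyReducibleGroupRep ρ ↔ ∀ g : G, IsDiagonalizable (ρ g : V →ₗ[ℂ] V) := by
  have hindex : (Z.index : ℂ) ≠ 0 := Nat.cast_ne_zero.mpr Subgroup.index_ne_zero_of_finite
  constructor
  · rintro ⟨ι, W, -, hsup, hW⟩ g
    refine isDiagonalizable_of_iSup_eigenspace_eq_top
      (eq_top_iff.mpr (hsup ▸ iSup_le fun i => ?_))
    simp only [isGroupSubrep_iff_mem_invtSubmodule] at hW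
    exact Representation.le_iSup_eigenspace_of_irreducible (hW i).1 (hW i).2 hZ hindex g
  · intro hdiag
    have := ρ.toRepresentation.isSemisimpleModule_asModule_of_isSemisimple hZ hindex
      fun z _ => (hdiag z).isSemisimple
    exact completelyReducibleGroupRep_of_isSemisimpleModule ρ
end

section
/- Let Q be a finite quandle and ρ : Q → GL(V) an irreducible quandle representation on a finite-dimensional complex vector space V. Then there exists an inner product on V for which every ρ(x), x ∈ Q, is an isometry if and only if |det ρ(x)| = 1 for every x ∈ Q. -/
/-!
A quandle representation `ρ` extends to a representation `π` of the enveloping group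
`EnvelGroup Q`, and `π g * ρ x * (π g)⁻¹ = ρ (g • x)` for the action of `EnvelGroup Q` on `Q`.
Since `Q` is finite, the kernel `N` of this action has finite index; each `π n` with `n ∈ N`
commutes with all `ρ x`, so it is a scalar by Schur's lemma, and a unimodular one because
`|det π g| = 1` for every `g`. Unimodular scalars preserve every inner product, so summing a
reference inner product over representatives of `EnvelGroup Q ⧸ N` gives an invariant one.
Conversely, an isometry of a finite-dimensional inner product space has `|det| = 1`.
-/

open Quandles

open scoped InnerProductSpace
open Rack

section InnerProduct

variable {𝕜 V F : Type*} [RCLike 𝕜] [AddCommGroup V] [Module 𝕜 V] [NormedAddCommGroup F]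
  [InnerProductSpace 𝕜 F]

@[reducible]
def InnerProductSpace.Core.comap (f : V →ₗ[𝕜] F) (hf : Function.Injective f) :
    InnerProductSpace.Core 𝕜 V where
  inner v w := ⟪f v, f w⟫_𝕜
  conj_inner_symm _ _ := _root_.inner_conj_symm _ _
  re_inner_nonneg _ := _root_.inner_self_nonneg
  add_left _ _ _ := by rw [map_add, _root_.inner_add_left]
  smul_left _ _ _ := by rw [map_smul, _root_.inner_smul_left]
  definite _ hv := hf (by rw [map_zero]; exact _root_.inner_self_eq_zero.mp hv)

theorem InnerProductSpace.Core.exists_inner_eq_sum {ι : Type*} [Fintype ι]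
    (T : ι → V →ₗ[𝕜] F) {i₀ : ι} (hT : Function.Injective (T i₀)) :
    ∃ c : InnerProductSpace.Core 𝕜 V, ∀ v w, c.inner v w = ∑ i, ⟪T i v, T i w⟫_𝕜 := by
  let f : V →ₗ[𝕜] PiLp 2 (fun _ : ι => F) :=
    (WithLp.linearEquiv 2 𝕜 (ι → F)).symm.toLinearMap ∘ₗ LinearMap.pi T
  have hf : Function.Injective f := fun v w h => hT (congr_fun (congrArg WithLp.ofLp h) i₀)
  exact ⟨comap f hf, fun v w => PiLp.inner_apply (𝕜 := 𝕜) (f v) (f w)⟩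

theorem InnerProductSpace.Core.norm_det_eq_one_of_inner_map_map [FiniteDimensional 𝕜 V]
    (c : InnerProductSpace.Core 𝕜 V) {f : V →ₗ[𝕜] V}
    (hf : ∀ v w, c.inner (f v) (f w) = c.inner v w) :
    ‖LinearMap.det f‖ = 1 := by
  let : NormedAddCommGroup V := c.toNormedAddCommGroup
  let : InnerProductSpace 𝕜 V := InnerProductSpace.ofCore c.toCore
  rw [← LinearMap.normDet_eq_norm_det]
  exact (f.isometryOfInner hf).normDet_eq_one

theorem inner_smul_smul_of_norm_eq_one {μ : 𝕜} (hμ : ‖μ‖ = 1) (x y : F) :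
    ⟪μ • x, μ • y⟫_𝕜 = ⟪x, y⟫_𝕜 := by
  rw [inner_smul_left, inner_smul_right, ← mul_assoc, RCLike.conj_mul, hμ]
  simp

end InnerProduct

theorem QuotientGroup.sum_out_mul {G M : Type*} [Group G] [AddCommMonoid M] (N : Subgroup G)
    [N.Normal] [Fintype (G ⧸ N)] (φ : G → M) (hφ : ∀ x, ∀ n ∈ N, φ (x * n) = φ x) (g : G) :
    ∑ q : G ⧸ N, φ (q.out * g) = ∑ q : G ⧸ N, φ q.out := by
  have hcoset : ∀ q : G ⧸ N, φ (q.out * g) = φ (q * g).out := by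
    intro q
    obtain ⟨n, hn⟩ := QuotientGroup.mk_out_eq_mul N (q.out * g)
    rw [QuotientGroup.mk_mul, QuotientGroup.out_eq'] at hn
    rw [hn, hφ _ _ n.2]
  simp_rw [hcoset]
  exact Fintype.sum_equiv (Equiv.mulRight (g : G ⧸ N)) _ _ fun q => rfl

theorem exists_innerProductCore_invariant_of_finiteIndex {𝕜 V G : Type*} [RCLike 𝕜]
    [AddCommGroup V] [Module 𝕜 V] [FiniteDimensional 𝕜 V] [Group G] (π : G →* V ≃ₗ[𝕜] V)
    (N : Subgroup G) [N.Normal] [N.FiniteIndex]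
    (hN : ∀ n ∈ N, ∃ μ : 𝕜, ‖μ‖ = 1 ∧ ∀ v, π n v = μ • v) :
    ∃ c : InnerProductSpace.Core 𝕜 V, ∀ g v w, c.inner (π g v) (π g w) = c.inner v w := by
  have := Fintype.ofFinite (G ⧸ N)
  let e : V ≃ₗ[𝕜] EuclideanSpace 𝕜 (Fin (Module.finrank 𝕜 V)) :=
    (Module.finBasis 𝕜 V).equivFun.trans (WithLp.linearEquiv 2 𝕜 _).symm
  obtain ⟨c, hc⟩ := InnerProductSpace.Core.exists_inner_eq_sum
    (fun q : G ⧸ N => e.toLinearMap ∘ₗ (π q.out).toLinearMap) (i₀ := 1)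
    (e.injective.comp (π _).injective)
  refine ⟨c, fun g v w => ?_⟩
  have hφ : ∀ x, ∀ n ∈ N,
      ⟪e (π (x * n) v), e (π (x * n) w)⟫_𝕜 = ⟪e (π x v), e (π x w)⟫_𝕜 := by
    intro x n hn
    obtain ⟨μ, hμ, hμπ⟩ := hN _ (‹N.Normal›.conj_mem n hn x)
    rw [show x * n = x * n * x⁻¹ * x by group, map_mul]
    simp only [LinearEquiv.mul_apply, hμπ, map_smul, inner_smul_smul_of_norm_eq_one hμ]
  simp only [hc, LinearMap.comp_apply, LinearEquiv.coe_coe, ← LinearEquiv.mul_apply, ← map_mul]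
  exact QuotientGroup.sum_out_mul N (fun x => ⟪e (π x v), e (π x w)⟫_𝕜) hφ g

theorem Module.End.exists_eq_smul_one_of_forall_commute {K V ι : Type*} [Field K]
    [IsAlgClosed K] [AddCommGroup V] [Module K V] [FiniteDimensional K V] [Nontrivial V]
    (T : ι → Module.End K V)
    (hirr : ∀ W : Submodule K V, (∀ i, ∀ v ∈ W, T i v ∈ W) → W = ⊥ ∨ W = ⊤)
    {f : Module.End K V} (hf : ∀ i, Commute f (T i)) : ∃ μ : K, f = μ • 1 := by
  obtain ⟨μ, hμ⟩ := f.exists_eigenvalue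
  have hinv : ∀ i, ∀ v ∈ f.eigenspace μ, T i v ∈ f.eigenspace μ := fun i =>
    mapsTo_genEigenspace_of_comm (hf i) μ 1
  have htop := (hirr _ hinv).resolve_left (hasEigenvalue_iff.mp hμ)
  exact ⟨μ, LinearMap.ext fun v => mem_eigenspace_iff.mp (htop ▸ Submodule.mem_top)⟩

theorem Module.End.exists_norm_eq_one_eq_smul_one_of_forall_commute {K V ι : Type*}
    [NormedField K] [IsAlgClosed K] [AddCommGroup V] [Module K V] [FiniteDimensional K V]
    (T : ι → Module.End K V)
    (hirr : ∀ W : Submodule K V, (∀ i, ∀ v ∈ W, T i v ∈ W) → W = ⊥ ∨ W = ⊤)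
    {f : Module.End K V} (hf : ∀ i, Commute f (T i)) (hdet : ‖LinearMap.det f‖ = 1) :
    ∃ μ : K, ‖μ‖ = 1 ∧ f = μ • 1 := by
  rcases subsingleton_or_nontrivial V with hV | hV
  · exact ⟨1, norm_one, Subsingleton.elim _ _⟩
  obtain ⟨μ, rfl⟩ := exists_eq_smul_one_of_forall_commute T hirr hf
  rw [LinearMap.det_smul, map_one, mul_one, norm_pow] at hdet
  exact ⟨μ, (pow_eq_one_iff_of_nonneg (norm_nonneg μ) Module.finrank_pos.ne').mp hdet, rfl⟩

theorem Rack.closure_range_toEnvelGroup_s11 (R : Type*) [Rack R] :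
    Subgroup.closure (Set.range (toEnvelGroup R)) = ⊤ := by
  set H := Subgroup.closure (Set.range (toEnvelGroup R))
  let f : R →◃ Quandle.Conj H :=
    { toFun x := ⟨toEnvelGroup R x, Subgroup.subset_closure ⟨x, rfl⟩⟩
      map_act' := Subtype.ext (toEnvelGroup R).map_act }
  have hid : MonoidHom.id _ = toEnvelGroup.map (toEnvelGroup R) :=
    toEnvelGroup.univ_uniq _ _ _ _ rfl
  have hf : H.subtype.comp (toEnvelGroup.map f) = toEnvelGroup.map (toEnvelGroup R) :=
    toEnvelGroup.univ_uniq _ _ _ _ rfl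
  refine eq_top_iff.mpr fun g _ => ?_
  rw [← MonoidHom.id_apply (M := EnvelGroup R) g, hid, ← hf]
  exact (toEnvelGroup.map f g).2

namespace IsQuandleRep

variable {Q : Type} [Quandle Q] {V : Type} [AddCommGroup V] [Module ℂ V] {ρ : Q → V ≃ₗ[ℂ] V}

def envelRep (hrep : IsQuandleRep ρ) : EnvelGroup Q →* V ≃ₗ[ℂ] V :=
  toEnvelGroup.map { toFun := ρ, map_act' := hrep _ _ }

theorem envelRep_conj (hrep : IsQuandleRep ρ) (g : EnvelGroup Q) (x : Q) :
    hrep.envelRep g * ρ x * (hrep.envelRep g)⁻¹ = ρ (envelAction g x) := by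
  have hg : g ∈ Subgroup.closure (Set.range (toEnvelGroup Q)) := by
    simp [closure_range_toEnvelGroup_s11]
  induction hg using Subgroup.closure_induction generalizing x with
  | mem _ h =>
    obtain ⟨y, rfl⟩ := h
    exact (hrep y x).symm
  | one => simp
  | mul g h _ _ ihg ihh =>
    rw [map_mul, map_mul, Equiv.Perm.mul_apply, ← ihg, ← ihh]
    group
  | inv g _ ih =>
    have h := ih ((envelAction g)⁻¹ x)
    rw [← Equiv.Perm.mul_apply, mul_inv_cancel, Equiv.Perm.one_apply] at h
    rw [map_inv, map_inv, ← h]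
    group

theorem norm_det_envelRep (hrep : IsQuandleRep ρ)
    (hdet : ∀ x, ‖LinearMap.det (ρ x : V →ₗ[ℂ] V)‖ = 1) (g : EnvelGroup Q) :
    ‖LinearMap.det (hrep.envelRep g : V →ₗ[ℂ] V)‖ = 1 := by
  let δ : EnvelGroup Q →* ℝ := (normHom : ℂ →*₀ ℝ).toMonoidHom.comp
    ((Units.coeHom ℂ).comp (LinearEquiv.det.comp hrep.envelRep))
  have hδ : ∀ g, δ g = ‖LinearMap.det (hrep.envelRep g : V →ₗ[ℂ] V)‖ := fun g =>
    congrArg norm (LinearEquiv.coe_det (hrep.envelRep g))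
  have hker : δ.ker = ⊤ := by
    rw [eq_top_iff, ← closure_range_toEnvelGroup_s11, Subgroup.closure_le]
    rintro _ ⟨x, rfl⟩
    exact (hδ _).trans (hdet x)
  rw [← hδ, ← MonoidHom.mem_ker, hker]
  exact Subgroup.mem_top g

theorem exists_innerProductCore_invariant [Finite Q] [FiniteDimensional ℂ V]
    (hrep : IsQuandleRep ρ) (hirr : ∀ W : Submodule ℂ V, IsSubrep ρ W → W = ⊥ ∨ W = ⊤)
    (hdet : ∀ x, ‖LinearMap.det (ρ x : V →ₗ[ℂ] V)‖ = 1) :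
    ∃ c : InnerProductSpace.Core ℂ V, ∀ x v w, c.inner (ρ x v) (ρ x w) = c.inner v w := by
  have hscalar : ∀ n ∈ (envelAction : EnvelGroup Q →* Equiv.Perm Q).ker,
      ∃ μ : ℂ, ‖μ‖ = 1 ∧ ∀ v, hrep.envelRep n v = μ • v := by
    intro n hn
    have hcomm : ∀ x, Commute (hrep.envelRep n : Module.End ℂ V) (ρ x) := by
      intro x
      have h := hrep.envelRep_conj n x
      rw [MonoidHom.mem_ker.mp hn, Equiv.Perm.one_apply, mul_inv_eq_iff_eq_mul] at h
      exact Commute.map h LinearEquiv.automorphismGroup.toLinearMapMonoidHom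
    obtain ⟨μ, hμ, hnμ⟩ := Module.End.exists_norm_eq_one_eq_smul_one_of_forall_commute
      (fun x => (ρ x : Module.End ℂ V)) hirr hcomm (hrep.norm_det_envelRep hdet n)
    exact ⟨μ, hμ, LinearMap.congr_fun hnμ⟩
  obtain ⟨c, hc⟩ := exists_innerProductCore_invariant_of_finiteIndex hrep.envelRep _ hscalar
  exact ⟨c, fun x => hc (toEnvelGroup Q x)⟩

end IsQuandleRep

/-- An irreducible finite-dimensional complex representation `ρ` of a finite quandle `Q`
is unitary for some inner product on `V` if and only if `|det ρ(x)| = 1` for all `x ∈ Q`. -/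
theorem irreducible_quandle_rep_unitary_iff_abs_det_eq_one
    {Q : Type} [Quandle Q] [Finite Q] {V : Type} [AddCommGroup V] [Module ℂ V]
    [FiniteDimensional ℂ V] (ρ : Q → V ≃ₗ[ℂ] V) (hrep : IsQuandleRep ρ)
    (hirr : ∀ W : Submodule ℂ V, IsSubrep ρ W → W = ⊥ ∨ W = ⊤) :
    (∃ c : InnerProductSpace.Core ℂ V,
        ∀ (x : Q) (v w : V), c.inner (ρ x v) (ρ x w) = c.inner v w) ↔
      ∀ x : Q, ‖LinearMap.det (ρ x : V →ₗ[ℂ] V)‖ = 1 :=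
  ⟨fun ⟨c, hc⟩ x => c.norm_det_eq_one_of_inner_map_map (hc x),
    hrep.exists_innerProductCore_invariant hirr⟩
end

section
/- Let n, m be positive integers and let ρ : Q_{n,m} → GL(V) be an irreducible quandle representation on a finite-dimensional complex vector space V with dim V ≥ 2. Then there exist an integer d > 1 dividing both n and m and a primitive d-th root of unity α ∈ ℂ such that ρ(y₁) ρ(x₁) ρ(y₁)⁻¹ = α·ρ(x₁), and there exists λ ∈ ℂ^× such that ρ(y₁)^d = λ·id_V. -/
/-!
Write `A = ρ(x₁)` and `B = ρ(y₁)`. Conjugation by `B` (resp. `A`) shifts the indices of the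
`x`'s (resp. `y`'s), so every `ρ(q)` is a conjugate of `A` by a power of `B` or of `B` by a power
of `A`; in particular whatever commutes with `A` and `B` commutes with all of `ρ`. The commutator
`B A B⁻¹ A⁻¹` is both `ρ(x₂) ρ(x₁)⁻¹` and `(ρ(y₂) ρ(y₁)⁻¹)⁻¹`, so it commutes with all of `ρ`
and Schur's lemma makes it a scalar `α`, i.e. `B A = α A B`. As `x_{1+n} = x₁` and
`y_{1+m} = y₁`, `Bⁿ` commutes with `A` and `Aᵐ` with `B`, whence `αⁿ = αᵐ = 1`. If `α = 1`, all
`ρ(q)` commute, hence are scalars, and `dim V = 1`. Finally `B^d`, `d` the order of `α`, commutes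
with `A` and `B`, so it is a scalar by Schur's lemma again.
-/

open Quandles

/-- The underlying set of the quandle `Q_{n,m}`. -/
inductive Qnm (n m : ℕ) : Type
  | x : ZMod n → Qnm n m
  | y : ZMod m → Qnm n m

namespace Qnm

variable {n m : ℕ}

/-- The quandle structure on `Q_{n,m}`:
`x_i ◃ y_j = y_{j+1}`, `y_i ◃ x_j = x_{j+1}`, `x_i ◃ x_j = x_j`, `y_i ◃ y_j = y_j`. -/
instance : Quandle (Qnm n m) where
  act a b :=
    match a, b with
    | .x _, .y j => .y (j + 1)
    | .y _, .x j => .x (j + 1)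
    | .x _, .x j => .x j
    | .y _, .y j => .y j
  self_distrib := by
    intro a b c
    rcases a with i | i <;> rcases b with j | j <;> rcases c with k | k <;> rfl
  invAct a b :=
    match a, b with
    | .x _, .y j => .y (j - 1)
    | .y _, .x j => .x (j - 1)
    | .x _, .x j => .x j
    | .y _, .y j => .y j
  left_inv := by
    intro a b
    rcases a with i | i <;> rcases b with j | j <;> simp
  right_inv := by
    intro a b
    rcases a with i | i <;> rcases b with j | j <;> simp
  fix := by
    intro a
    rcases a with i | i <;> rfl

end Qnm

open Module

section Irreducible

variable {K V ι : Type*} [Field K] [AddCommGroup V] [Module K V]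

def IsIrreducibleFamily (ρ : ι → End K V) : Prop :=
  ∀ W : Submodule K V, (∀ i, ∀ v ∈ W, ρ i v ∈ W) → W = ⊥ ∨ W = ⊤

variable [IsAlgClosed K] [FiniteDimensional K V] [Nontrivial V] {ρ : ι → End K V}

theorem IsIrreducibleFamily.exists_eq_smul_one (hρ : IsIrreducibleFamily ρ) {S : End K V}
    (hS : ∀ i, Commute S (ρ i)) : ∃ c : K, S = c • 1 := by
  obtain ⟨c, hc⟩ := S.exists_eigenvalue
  have hinv : ∀ i, ∀ v ∈ S.eigenspace c, ρ i v ∈ S.eigenspace c :=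
    fun i _ hv => End.mapsTo_genEigenspace_of_comm (hS i) c 1 hv
  have htop : S.eigenspace c = ⊤ := (hρ _ hinv).resolve_left (End.hasEigenvalue_iff.mp hc)
  refine ⟨c, LinearMap.ext fun v => ?_⟩
  simpa using End.mem_eigenspace_iff.mp (htop ▸ Submodule.mem_top : v ∈ S.eigenspace c)

theorem IsIrreducibleFamily.finrank_eq_one_of_pairwise_commute (hρ : IsIrreducibleFamily ρ)
    (hcomm : ∀ i j, Commute (ρ i) (ρ j)) : finrank K V = 1 := by
  obtain ⟨v, hv⟩ := exists_ne (0 : V)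
  have hinv : ∀ i, ∀ w ∈ K ∙ v, ρ i w ∈ K ∙ v := by
    intro i w hw
    obtain ⟨c, hc⟩ := hρ.exists_eq_smul_one (hcomm i)
    simpa [hc] using Submodule.smul_mem _ c hw
  have htop : (K ∙ v) = ⊤ := (hρ _ hinv).resolve_left (by simpa using hv)
  rw [← finrank_top, ← htop, finrank_span_singleton hv]

end Irreducible

section CommuteUpToScalar

variable {M S : Type*} [Monoid M] [Monoid S] [MulAction S M] [IsScalarTower S M M]
  [SMulCommClass S M M] {a b : M} {α : S}

theorem pow_mul_eq_smul_mul_pow (h : b * a = α • (a * b)) (k : ℕ) :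
    b ^ k * a = α ^ k • (a * b ^ k) := by
  induction k with
  | zero => simp
  | succ k ih =>
    calc b ^ (k + 1) * a = b ^ k * (b * a) := by rw [pow_succ, mul_assoc]
      _ = α • ((b ^ k * a) * b) := by rw [h, mul_smul_comm, mul_assoc]
      _ = α ^ (k + 1) • (a * b ^ (k + 1)) := by
        rw [ih, smul_mul_assoc, smul_smul, ← pow_succ', mul_assoc, ← pow_succ]

theorem mul_pow_eq_smul_pow_mul (h : b * a = α • (a * b)) (k : ℕ) :
    b * a ^ k = α ^ k • (a ^ k * b) := by
  induction k with
  | zero => simp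
  | succ k ih =>
    calc b * a ^ (k + 1) = (b * a ^ k) * a := by rw [pow_succ, mul_assoc]
      _ = α ^ k • (a ^ k * (b * a)) := by rw [ih, smul_mul_assoc, mul_assoc]
      _ = α ^ (k + 1) • (a ^ (k + 1) * b) := by
        rw [h, mul_smul_comm, smul_smul, ← pow_succ, ← mul_assoc, ← pow_succ]

end CommuteUpToScalar

theorem apply_add_intCast_eq_conj_zpow {R G : Type*} [AddGroupWithOne R] [Group G]
    {f : R → G} {g : G} (hf : ∀ r, f (r + 1) = g * f r * g⁻¹) (r : R) (k : ℤ) :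
    f (r + k) = g ^ k * f r * (g ^ k)⁻¹ := by
  induction k using Int.induction_on with
  | zero => simp
  | succ i ih =>
    rw [Int.cast_add, Int.cast_one, ← add_assoc, hf, ih]
    group
  | pred i ih =>
    have h := hf (r + ((-i - 1 : ℤ) : R))
    rw [show r + ((-i - 1 : ℤ) : R) + 1 = r + ((-i : ℤ) : R) by
      rw [Int.cast_sub, Int.cast_one, add_sub, sub_add_cancel], ih] at h
    calc f (r + ((-i - 1 : ℤ) : R))
        = g⁻¹ * (g * f (r + ((-i - 1 : ℤ) : R)) * g⁻¹) * g := by group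
      _ = _ := by rw [← h]; group

theorem commute_of_act_eq_self {Q G : Type*} [Quandle Q] [Group G] {ρ : Q → G}
    (hρ : ∀ a b, ρ (a ◃ b) = ρ a * ρ b * (ρ a)⁻¹) {a b : Q} (hab : a ◃ b = b) :
    Commute (ρ a) (ρ b) :=
  mul_inv_eq_iff_eq_mul.mp (hab ▸ hρ a b).symm

theorem pow_eq_one_of_commute_pow_left {K R : Type*} [Field K] [Ring R] [Module K R]
    [IsScalarTower K R R] [SMulCommClass K R R] [NoZeroSMulDivisors K R] {a b : R} {α : K}
    (h : b * a = α • (a * b)) {k : ℕ} (hk : Commute (b ^ k) a) (hne : a * b ^ k ≠ 0) :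
    α ^ k = 1 :=
  smul_left_injective K hne <| show α ^ k • _ = (1 : K) • _ by
    rw [one_smul, ← pow_mul_eq_smul_mul_pow h, hk.eq]

theorem pow_eq_one_of_commute_pow_right {K R : Type*} [Field K] [Ring R] [Module K R]
    [IsScalarTower K R R] [SMulCommClass K R R] [NoZeroSMulDivisors K R] {a b : R} {α : K}
    (h : b * a = α • (a * b)) {k : ℕ} (hk : Commute b (a ^ k)) (hne : a ^ k * b ≠ 0) :
    α ^ k = 1 :=
  smul_left_injective K hne <| show α ^ k • _ = (1 : K) • _ by
    rw [one_smul, ← mul_pow_eq_smul_pow_mul h, hk.eq]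

namespace Qnm

variable {n m : ℕ} {G : Type*} [Group G] {ρ : Qnm n m → G}

theorem rho_x_add_intCast (hρ : ∀ a b, ρ (a ◃ b) = ρ a * ρ b * (ρ a)⁻¹) (j : ZMod m)
    (i : ZMod n) (k : ℤ) : ρ (.x (i + k)) = ρ (.y j) ^ k * ρ (.x i) * (ρ (.y j) ^ k)⁻¹ :=
  apply_add_intCast_eq_conj_zpow (f := fun i => ρ (.x i)) (fun r => hρ (.y j) (.x r)) i k

theorem rho_y_add_intCast (hρ : ∀ a b, ρ (a ◃ b) = ρ a * ρ b * (ρ a)⁻¹) (i : ZMod n)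
    (j : ZMod m) (k : ℤ) : ρ (.y (j + k)) = ρ (.x i) ^ k * ρ (.y j) * (ρ (.x i) ^ k)⁻¹ :=
  apply_add_intCast_eq_conj_zpow (f := fun j => ρ (.y j)) (fun r => hρ (.x i) (.y r)) j k

theorem commute_x_x (hρ : ∀ a b, ρ (a ◃ b) = ρ a * ρ b * (ρ a)⁻¹) (i j : ZMod n) :
    Commute (ρ (.x i)) (ρ (.x j)) :=
  commute_of_act_eq_self hρ rfl

theorem commute_y_y (hρ : ∀ a b, ρ (a ◃ b) = ρ a * ρ b * (ρ a)⁻¹) (i j : ZMod m) :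
    Commute (ρ (.y i)) (ρ (.y j)) :=
  commute_of_act_eq_self hρ rfl

theorem commute_rho_of_commute (hρ : ∀ a b, ρ (a ◃ b) = ρ a * ρ b * (ρ a)⁻¹) {g : G}
    (hx : Commute g (ρ (.x 1))) (hy : Commute g (ρ (.y 1))) (q : Qnm n m) : Commute g (ρ q) := by
  rcases q with i | j
  · obtain ⟨k, hk⟩ := ZMod.intCast_surjective (i - 1)
    rw [show i = 1 + (k : ZMod n) by rw [hk]; ring, rho_x_add_intCast hρ 1]
    exact ((hy.zpow_right k).mul_right hx).mul_right (hy.zpow_right k).inv_right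
  · obtain ⟨k, hk⟩ := ZMod.intCast_surjective (j - 1)
    rw [show j = 1 + (k : ZMod m) by rw [hk]; ring, rho_y_add_intCast hρ 1]
    exact ((hx.zpow_right k).mul_right hy).mul_right (hx.zpow_right k).inv_right

theorem pairwise_commute_of_commute (hρ : ∀ a b, ρ (a ◃ b) = ρ a * ρ b * (ρ a)⁻¹)
    (h : Commute (ρ (.x 1)) (ρ (.y 1))) (p q : Qnm n m) : Commute (ρ p) (ρ q) :=
  commute_rho_of_commute hρ (commute_rho_of_commute hρ (.refl _) h p).symm
    (commute_rho_of_commute hρ h.symm (.refl _) p).symm q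

theorem commute_commutator (hρ : ∀ a b, ρ (a ◃ b) = ρ a * ρ b * (ρ a)⁻¹) (q : Qnm n m) :
    Commute (ρ (.y 1) * ρ (.x 1) * (ρ (.y 1))⁻¹ * (ρ (.x 1))⁻¹) (ρ q) := by
  rcases q with i | j
  · rw [show ρ (.y 1) * ρ (.x 1) * (ρ (.y 1))⁻¹ = ρ (.x (1 + 1)) from (hρ (.y 1) (.x 1)).symm]
    exact (commute_x_x hρ _ i).mul_left (commute_x_x hρ 1 i).inv_left
  · have hT : ρ (.y 1) * ρ (.x 1) * (ρ (.y 1))⁻¹ * (ρ (.x 1))⁻¹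
        = (ρ (.y (1 + 1)) * (ρ (.y 1))⁻¹)⁻¹ := by
      rw [show ρ (.y (1 + 1)) = _ from hρ (.x 1) (.y 1)]
      group
    rw [hT]
    exact ((commute_y_y hρ _ j).mul_left (commute_y_y hρ 1 j).inv_left).inv_left

theorem commute_pow_y_one_x_one (hρ : ∀ a b, ρ (a ◃ b) = ρ a * ρ b * (ρ a)⁻¹) :
    Commute (ρ (.y 1) ^ n) (ρ (.x 1)) := by
  have h := rho_x_add_intCast hρ 1 1 n
  rw [Int.cast_natCast, ZMod.natCast_self, add_zero, zpow_natCast] at h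
  exact (eq_mul_inv_iff_mul_eq.mp h).symm

theorem commute_y_one_pow_x_one (hρ : ∀ a b, ρ (a ◃ b) = ρ a * ρ b * (ρ a)⁻¹) :
    Commute (ρ (.y 1)) (ρ (.x 1) ^ m) := by
  have h := rho_y_add_intCast hρ 1 1 m
  rw [Int.cast_natCast, ZMod.natCast_self, add_zero, zpow_natCast] at h
  exact eq_mul_inv_iff_mul_eq.mp h

end Qnm

theorem LinearEquiv.mul_eq_smul_mul_of_conj_eq_smul {R M : Type*} [CommSemiring R]
    [AddCommMonoid M] [Module R M] {e f : M ≃ₗ[R] M} {α : R}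
    (h : ((f * e * f⁻¹ : M ≃ₗ[R] M) : End R M) = α • (e : End R M)) :
    (f : End R M) * e = α • ((e : End R M) * f) := by
  rw [← smul_mul_assoc, ← h, ← coe_toLinearMap_mul (e₁ := f * e * f⁻¹), inv_mul_cancel_right]
  rfl

namespace Qnm

variable {K V : Type*} [Field K] [AddCommGroup V] [Module K V] [Nontrivial V] {n m : ℕ}
  {ρ : Qnm n m → V ≃ₗ[K] V}

theorem exists_conj_x_one_eq_smul [IsAlgClosed K] [FiniteDimensional K V]
    (hρ : ∀ a b, ρ (a ◃ b) = ρ a * ρ b * (ρ a)⁻¹)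
    (hirr : IsIrreducibleFamily fun q => (ρ q : End K V)) :
    ∃ α : K, ((ρ (.y 1) * ρ (.x 1) * (ρ (.y 1))⁻¹ : V ≃ₗ[K] V) : End K V) =
      α • (ρ (.x 1) : End K V) := by
  let φ := LinearEquiv.automorphismGroup.toLinearMapMonoidHom (R := K) (M := V)
  obtain ⟨α, hα⟩ := hirr.exists_eq_smul_one fun q => (commute_commutator hρ q).map φ
  refine ⟨α, ?_⟩
  calc φ (ρ (.y 1) * ρ (.x 1) * (ρ (.y 1))⁻¹)
      = φ (ρ (.y 1) * ρ (.x 1) * (ρ (.y 1))⁻¹ * (ρ (.x 1))⁻¹) * φ (ρ (.x 1)) := by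
        rw [← map_mul, inv_mul_cancel_right]
    _ = α • φ (ρ (.x 1)) := by rw [hα, smul_mul_assoc, one_mul]

theorem pow_eq_one_of_conj_eq_smul (hρ : ∀ a b, ρ (a ◃ b) = ρ a * ρ b * (ρ a)⁻¹) {α : K}
    (hα : ((ρ (.y 1) * ρ (.x 1) * (ρ (.y 1))⁻¹ : V ≃ₗ[K] V) : End K V) =
      α • (ρ (.x 1) : End K V)) :
    α ^ n = 1 ∧ α ^ m = 1 := by
  let φ := LinearEquiv.automorphismGroup.toLinearMapMonoidHom (R := K) (M := V)
  have hne (e : V ≃ₗ[K] V) : φ e ≠ 0 := ((Group.isUnit e).map φ).ne_zero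
  have hBA : φ (ρ (.y 1)) * φ (ρ (.x 1)) = α • (φ (ρ (.x 1)) * φ (ρ (.y 1))) :=
    LinearEquiv.mul_eq_smul_mul_of_conj_eq_smul hα
  exact ⟨pow_eq_one_of_commute_pow_left hBA
      (by simpa only [map_pow] using (commute_pow_y_one_x_one hρ).map φ)
      (by simpa only [map_pow, map_mul] using hne (ρ (.x 1) * ρ (.y 1) ^ n)),
    pow_eq_one_of_commute_pow_right hBA
      (by simpa only [map_pow] using (commute_y_one_pow_x_one hρ).map φ)
      (by simpa only [map_pow, map_mul] using hne (ρ (.x 1) ^ m * ρ (.y 1)))⟩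

theorem finrank_eq_one_of_commute [IsAlgClosed K] [FiniteDimensional K V]
    (hρ : ∀ a b, ρ (a ◃ b) = ρ a * ρ b * (ρ a)⁻¹)
    (hirr : IsIrreducibleFamily fun q => (ρ q : End K V))
    (h : Commute (ρ (.x 1)) (ρ (.y 1))) : finrank K V = 1 :=
  hirr.finrank_eq_one_of_pairwise_commute fun p q =>
    (pairwise_commute_of_commute hρ h p q).map LinearEquiv.automorphismGroup.toLinearMapMonoidHom

theorem exists_pow_y_one_eq_smul [IsAlgClosed K] [FiniteDimensional K V]
    (hρ : ∀ a b, ρ (a ◃ b) = ρ a * ρ b * (ρ a)⁻¹)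
    (hirr : IsIrreducibleFamily fun q => (ρ q : End K V)) {α : K}
    (hα : ((ρ (.y 1) * ρ (.x 1) * (ρ (.y 1))⁻¹ : V ≃ₗ[K] V) : End K V) =
      α • (ρ (.x 1) : End K V))
    {d : ℕ} (hαd : α ^ d = 1) :
    ∃ lam : K, lam ≠ 0 ∧ ((ρ (.y 1) ^ d : V ≃ₗ[K] V) : End K V) = lam • LinearMap.id := by
  let φ := LinearEquiv.automorphismGroup.toLinearMapMonoidHom (R := K) (M := V)
  have hBA : φ (ρ (.y 1)) * φ (ρ (.x 1)) = α • (φ (ρ (.x 1)) * φ (ρ (.y 1))) :=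
    LinearEquiv.mul_eq_smul_mul_of_conj_eq_smul hα
  have hBdA : Commute (ρ (.y 1) ^ d) (ρ (.x 1)) := LinearEquiv.toLinearMap_injective <|
    show φ (_ * _) = φ (_ * _) by
      rw [map_mul, map_mul, map_pow, pow_mul_eq_smul_mul_pow hBA, hαd, one_smul]
  obtain ⟨lam, hlam⟩ := hirr.exists_eq_smul_one fun q =>
    (commute_rho_of_commute hρ hBdA ((Commute.refl _).pow_left d) q).map φ
  exact ⟨lam, fun h0 => ((Group.isUnit _).map φ).ne_zero (by rw [hlam, h0, zero_smul]), hlam⟩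

end Qnm

theorem qnm_irreducible_rep_structure_general (n m : ℕ) (hn : 0 < n)
    {V : Type} [AddCommGroup V] [Module ℂ V] [FiniteDimensional ℂ V]
    (hdim : 2 ≤ Module.finrank ℂ V)
    (ρ : Qnm n m → V ≃ₗ[ℂ] V) (hrep : IsQuandleRep ρ)
    (hirr : ∀ W : Submodule ℂ V, (∀ q : Qnm n m, ∀ v ∈ W, ρ q v ∈ W) → W = ⊥ ∨ W = ⊤) :
    ∃ d : ℕ, 1 < d ∧ d ∣ n ∧ d ∣ m ∧
      ∃ α : ℂ, IsPrimitiveRoot α d ∧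
        ((ρ (Qnm.y 1) * ρ (Qnm.x 1) * (ρ (Qnm.y 1))⁻¹ : V ≃ₗ[ℂ] V) : V →ₗ[ℂ] V) =
          α • ((ρ (Qnm.x 1) : V →ₗ[ℂ] V)) ∧
        ∃ lam : ℂ, lam ≠ 0 ∧
          ((ρ (Qnm.y 1) ^ d : V ≃ₗ[ℂ] V) : V →ₗ[ℂ] V) = lam • LinearMap.id := by
  have : Nontrivial V := Module.nontrivial_of_finrank_pos (R := ℂ) (by omega)
  have hirr' : IsIrreducibleFamily fun q => (ρ q : End ℂ V) := hirr
  obtain ⟨α, hα⟩ := Qnm.exists_conj_x_one_eq_smul hrep hirr'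
  obtain ⟨hαn, hαm⟩ := Qnm.pow_eq_one_of_conj_eq_smul hrep hα
  have hα1 : α ≠ 1 := by
    rintro rfl
    have hconj : ρ (.y 1) * ρ (.x 1) * (ρ (.y 1))⁻¹ = ρ (.x 1) :=
      LinearEquiv.toLinearMap_injective (hα.trans (one_smul ℂ _))
    have := Qnm.finrank_eq_one_of_commute hrep hirr' (mul_inv_eq_iff_eq_mul.mp hconj).symm
    omega
  have hd0 : 0 < orderOf α :=
    orderOf_pos_iff.mpr (isOfFinOrder_iff_pow_eq_one.mpr ⟨n, hn, hαn⟩)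
  have hd1 : orderOf α ≠ 1 := mt orderOf_eq_one_iff.mp hα1
  exact ⟨orderOf α, by omega, orderOf_dvd_of_pow_eq_one hαn, orderOf_dvd_of_pow_eq_one hαm,
    α, IsPrimitiveRoot.orderOf α, hα,
    Qnm.exists_pow_y_one_eq_smul hrep hirr' hα (pow_orderOf_eq_one α)⟩

/-- For an irreducible representation `ρ` of `Q_{n,m}` on a finite-dimensional complex
space of dimension at least `2`, there are an integer `d > 1` dividing `n` and `m` and a
primitive `d`-th root of unity `α` with `ρ(y₁) ρ(x₁) ρ(y₁)⁻¹ = α·ρ(x₁)`, and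
`ρ(y₁)^d = λ·id` for some nonzero scalar `λ`. -/
theorem qnm_irreducible_rep_structure (n m : ℕ) (hn : 0 < n) (hm : 0 < m)
    {V : Type} [AddCommGroup V] [Module ℂ V] [FiniteDimensional ℂ V]
    (hdim : 2 ≤ Module.finrank ℂ V)
    (ρ : Qnm n m → V ≃ₗ[ℂ] V) (hrep : IsQuandleRep ρ)
    (hirr : ∀ W : Submodule ℂ V, (∀ q : Qnm n m, ∀ v ∈ W, ρ q v ∈ W) → W = ⊥ ∨ W = ⊤) :
    ∃ d : ℕ, 1 < d ∧ d ∣ n ∧ d ∣ m ∧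
      ∃ α : ℂ, IsPrimitiveRoot α d ∧
        ((ρ (Qnm.y 1) * ρ (Qnm.x 1) * (ρ (Qnm.y 1))⁻¹ : V ≃ₗ[ℂ] V) : V →ₗ[ℂ] V) =
          α • ((ρ (Qnm.x 1) : V →ₗ[ℂ] V)) ∧
        ∃ lam : ℂ, lam ≠ 0 ∧
          ((ρ (Qnm.y 1) ^ d : V ≃ₗ[ℂ] V) : V →ₗ[ℂ] V) = lam • LinearMap.id :=
  qnm_irreducible_rep_structure_general n m hn hdim ρ hrep hirr
end
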